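/- arXiv:2605.12294 — 3 statements merged into one kernel-verified Lean document; each statement's English description precedes it below -/
import Mathlib

section
/- In a finite-horizon MDP whose states form a finite rooted tree, with deterministic transitions, finite nonempty action sets A(s) at each nonterminal state, and binary terminal rewards r ∈ {0,1}, the greedy policy π_greedy(s) = argmax_{a ∈ A(s)} Q^{π_u}(s,a) with respect to the Q-function of the uniform random policy π_u is optimal: following π_greedy from the root reaches a terminal state with reward 1 whenever some terminal state with reward 1 is reachable from the root. -/
/-- A finite rooted tree modeling the KG-induced finite-horizon MDP:
leaves are terminal states carrying a binary reward, internal nodes are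
nonterminal states with a finite nonempty set of actions (children),
and transitions are deterministic (action `i` leads to `child i`). -/
inductive MTree : Type
  | leaf (r : Bool)
  | node (n : ℕ) (child : Fin (n + 1) → MTree)

/-- `val t` is the probability of reaching a terminal state with reward 1
when starting at `t` and following the uniform random policy `π_u`.
For an action `a` available at a state `s`, the uniform-policy Q-value
satisfies `Q^{π_u}(s, a) = val (T(s, a))`. -/
noncomputable def MTree.val : MTree → ℝ
  | .leaf r => if r then 1 else 0
  | .node n child => (∑ i : Fin (n + 1), (child i).val) / (n + 1)

/-- Some terminal state with reward 1 is reachable from `t`. -/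
def MTree.reach1 : MTree → Prop
  | .leaf r => r = true
  | .node _ child => ∃ i, (child i).reach1

/-- Following (any) greedy policy w.r.t. the uniform-policy Q-function from `t`
reaches a terminal state with reward 1: at a leaf the reward is 1, and at an
internal node every action maximizing `Q^{π_u}` (i.e. every child of maximal
value) again leads greedily to a reward-1 terminal state. -/
def MTree.greedySuccess : MTree → Prop
  | .leaf r => r = true
  | .node _ child =>
      ∀ i, (∀ j, (child j).val ≤ (child i).val) → (child i).greedySuccess

lemma MTree.val_nonneg : ∀ t : MTree, 0 ≤ t.val
  | .leaf r => by by_cases h : r <;> simp [MTree.val, h]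
  | .node n child => by
      unfold MTree.val
      apply div_nonneg
      · exact Finset.sum_nonneg fun i _ => MTree.val_nonneg (child i)
      · positivity

lemma MTree.reach1_of_val_pos : ∀ t : MTree, 0 < t.val → t.reach1
  | .leaf r, h => by
      by_cases hr : r
      · exact hr
      · simp [MTree.val, hr] at h
  | .node n child, h => by
      unfold MTree.val at h
      have hsum : 0 < ∑ i : Fin (n + 1), (child i).val := by
        by_contra hc
        push_neg at hc
        exact absurd h (by
          simp only [not_lt]
          exact div_nonpos_of_nonpos_of_nonneg hc (by positivity))
      obtain ⟨i, _, hi⟩ := Finset.exists_lt_of_sum_lt (f := fun _ : Fin (n+1) => (0:ℝ))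
        (by simpa using hsum)
      exact ⟨i, MTree.reach1_of_val_pos (child i) hi⟩

lemma MTree.val_pos_of_reach1 : ∀ t : MTree, t.reach1 → 0 < t.val
  | .leaf r, h => by simp [MTree.reach1] at h; simp [MTree.val, h]
  | .node n child, ⟨i, hi⟩ => by
      unfold MTree.val
      apply div_pos _ (by positivity)
      exact Finset.sum_pos' (fun j _ => MTree.val_nonneg (child j))
        ⟨i, Finset.mem_univ i, MTree.val_pos_of_reach1 (child i) hi⟩

/-- **Optimality of the greedy policy w.r.t. the uniform-policy Q-function**:
in a finite rooted tree MDP with deterministic transitions, finite nonempty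
action sets and binary terminal rewards, following the greedy policy
`π_greedy(s) = argmax_{a ∈ A(s)} Q^{π_u}(s,a)` from the root reaches a
terminal state with reward 1 whenever some terminal state with reward 1 is
reachable from the root. -/
theorem greedy_policy_optimal (t : MTree) (h : t.reach1) : t.greedySuccess := by
  induction t with
  | leaf r => exact h
  | node n child ih =>
      obtain ⟨j, hj⟩ := h
      intro i hmax
      apply ih i
      apply MTree.reach1_of_val_pos
      exact lt_of_lt_of_le (MTree.val_pos_of_reach1 (child j) hj) (hmax j)
end

section
/- Lipschitz contraction for Rademacher averages: if for each i the map p ↦ ℓ(p, y_i) is L-Lipschitz on [τ, 1−τ], then E_σ[ sup_{Q ∈ 𝒬} (1/m) Σ_{i=1}^m σ_i ℓ(Q(x_i), y_i) ] ≤ L · E_σ[ sup_{Q ∈ 𝒬} (1/m) Σ_{i=1}^m σ_i Q(x_i) ], where σ_1,…,σ_m are i.i.d. Rademacher random variables. -/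
/-- The log-loss `ℓ(p,y) = −y log p − (1−y) log(1−p)`. -/
noncomputable def logLoss (p y : ℝ) : ℝ :=
  -(y * Real.log p) - (1 - y) * Real.log (1 - p)

open Finset

private lemma two_point {ι : Type*} [Nonempty ι] (A f t : ι → ℝ) (L : NNReal)
    (hft : ∀ p q, |f p - f q| ≤ (L : ℝ) * |t p - t q|)
    (h1 : BddAbove (Set.range fun q => A q + (L : ℝ) * t q))
    (h2 : BddAbove (Set.range fun q => A q - (L : ℝ) * t q)) :
    (⨆ q, A q + f q) + (⨆ q, A q - f q)
      ≤ (⨆ q, A q + (L : ℝ) * t q) + (⨆ q, A q - (L : ℝ) * t q) := by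
  set B := (⨆ q, A q + (L : ℝ) * t q) + (⨆ q, A q - (L : ℝ) * t q) with hB
  have key : ∀ p q, (A p + f p) + (A q - f q) ≤ B := by
    intro p q
    have h := hft p q
    rcases le_total (t q) (t p) with hle | hle
    · have habs : |t p - t q| = t p - t q := abs_of_nonneg (by linarith)
      have hf : f p - f q ≤ (L : ℝ) * (t p - t q) := by
        have := (le_abs_self (f p - f q)).trans h
        rwa [habs] at this
      have e1 := le_ciSup h1 p
      have e2 := le_ciSup h2 q
      rw [hB]
      have hL : (0:ℝ) ≤ (L:ℝ) := L.coe_nonneg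
      nlinarith
    · have habs : |t p - t q| = t q - t p := by
        rw [abs_of_nonpos (by linarith : t p - t q ≤ 0)]; ring
      have hf : f p - f q ≤ (L : ℝ) * (t q - t p) := by
        have := (le_abs_self (f p - f q)).trans h
        rwa [habs] at this
      have e1 := le_ciSup h2 p
      have e2 := le_ciSup h1 q
      rw [hB]
      nlinarith
  have hA : (⨆ q, A q + f q) ≤ B - ⨆ q, A q - f q := by
    apply ciSup_le
    intro p
    have : (⨆ q, A q - f q) ≤ B - (A p + f p) := ciSup_le fun q => by linarith [key p q]
    linarith
  linarith

private lemma sum_pair {m : ℕ} (κ : Fin m) (f : (Fin m → Bool) → ℝ) :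
    ∑ σ : Fin m → Bool, f σ
      = ∑ r : {j : Fin m // j ≠ κ} → Bool,
          (f ((Equiv.funSplitAt κ Bool).symm (true, r))
            + f ((Equiv.funSplitAt κ Bool).symm (false, r))) := by
  rw [← Equiv.sum_comp (Equiv.funSplitAt κ Bool).symm f, Fintype.sum_prod_type,
    Fintype.sum_bool]
  rw [← Finset.sum_add_distrib]

private noncomputable def mixFn {ι : Type*} {m : ℕ} (L : NNReal) (u v : ι → Fin m → ℝ)
    (k : ℕ) (q : ι) (i : Fin m) : ℝ :=
  if (i : ℕ) < k then (L : ℝ) * v q i else u q i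

private lemma contraction_aux {ι : Type*} [Nonempty ι] {m : ℕ} (L : NNReal)
    (u v : ι → Fin m → ℝ) (C : ℝ)
    (hu : ∀ q i, |u q i| ≤ C) (hv : ∀ q i, |v q i| ≤ C)
    (hc : ∀ (i : Fin m) (p q : ι), |u p i - u q i| ≤ (L : ℝ) * |v p i - v q i|) :
    ∑ σ : Fin m → Bool, (⨆ q : ι, ∑ i, (if σ i then (1 : ℝ) else -1) * u q i)
      ≤ ∑ σ : Fin m → Bool,
          (⨆ q : ι, ∑ i, (if σ i then (1 : ℝ) else -1) * ((L : ℝ) * v q i)) := by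
  set w := mixFn L u v with hwdef
  set B := |C| + (L : ℝ) * |C| with hBdef
  have hwB : ∀ k q i, |w k q i| ≤ B := by
    intro k q i
    have hC : (0:ℝ) ≤ |C| := abs_nonneg _
    have hL : (0:ℝ) ≤ (L:ℝ) := L.coe_nonneg
    rw [hwdef]
    unfold mixFn
    split_ifs
    · rw [abs_mul, abs_of_nonneg hL]
      have : |v q i| ≤ |C| := (hv q i).trans (le_abs_self C)
      nlinarith
    · have : |u q i| ≤ |C| := (hu q i).trans (le_abs_self C)
      nlinarith
  have hbdd : ∀ (k : ℕ) (σ : Fin m → Bool),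
      BddAbove (Set.range fun q : ι => ∑ i, (if σ i then (1 : ℝ) else -1) * w k q i) := by
    intro k σ
    refine ⟨(m : ℝ) * B, ?_⟩
    rintro _ ⟨q, rfl⟩
    calc ∑ i, (if σ i then (1 : ℝ) else -1) * w k q i
        ≤ ∑ _i : Fin m, B := by
          apply Finset.sum_le_sum
          intro i _
          have h1 : (if σ i then (1 : ℝ) else -1) * w k q i ≤ |(if σ i then (1 : ℝ) else -1) * w k q i| := le_abs_self _
          have h2 : |(if σ i then (1 : ℝ) else -1) * w k q i| = |w k q i| := by
            rw [abs_mul]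
            split_ifs <;> simp
          rw [h2] at h1
          exact h1.trans (hwB k q i)
      _ = (m : ℝ) * B := by simp [mul_comm]
  have step : ∀ k (hk : k < m),
      (∑ σ : Fin m → Bool, ⨆ q : ι, ∑ i, (if σ i then (1 : ℝ) else -1) * w k q i)
        ≤ ∑ σ : Fin m → Bool, ⨆ q : ι, ∑ i, (if σ i then (1 : ℝ) else -1) * w (k + 1) q i := by
    intro k hk
    set κ : Fin m := ⟨k, hk⟩ with hκ
    rw [sum_pair κ, sum_pair κ]
    apply Finset.sum_le_sum
    intro r _
    set σT := (Equiv.funSplitAt κ Bool).symm (true, r) with hσT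
    set σF := (Equiv.funSplitAt κ Bool).symm (false, r) with hσF
    have hσTκ : σT κ = true := by simp [hσT]
    have hσFκ : σF κ = false := by simp [hσF]
    have hoff : ∀ i : Fin m, i ≠ κ → σT i = σF i := by
      intro i hi
      simp [hσT, hσF, Equiv.funSplitAt_symm_apply, hi]
    have hwoff : ∀ q (i : Fin m), i ≠ κ → w (k + 1) q i = w k q i := by
      intro q i hi
      have hik : (i : ℕ) ≠ k := fun h => hi (Fin.ext h)
      rw [hwdef]
      unfold mixFn
      by_cases h : (i : ℕ) < k
      · rw [if_pos h, if_pos (by omega)]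
      · rw [if_neg h, if_neg (by omega)]
    have hwκk : ∀ q, w k q κ = u q κ := by
      intro q
      rw [hwdef]; unfold mixFn
      rw [if_neg (by simp [hκ])]
    have hwκk1 : ∀ q, w (k + 1) q κ = (L : ℝ) * v q κ := by
      intro q
      rw [hwdef]; unfold mixFn
      rw [if_pos (by simp [hκ])]
    set A : ι → ℝ := fun q => ∑ i ∈ Finset.univ.erase κ, (if σT i then (1 : ℝ) else -1) * w k q i with hA
    have hAF : ∀ q, ∑ i ∈ Finset.univ.erase κ, (if σF i then (1 : ℝ) else -1) * w k q i = A q := by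
      intro q
      apply Finset.sum_congr rfl
      intro i hi
      rw [← hoff i (Finset.mem_erase.mp hi).1]
    have hAT' : ∀ q, ∑ i ∈ Finset.univ.erase κ, (if σT i then (1 : ℝ) else -1) * w (k+1) q i = A q := by
      intro q
      apply Finset.sum_congr rfl
      intro i hi
      rw [hwoff q i (Finset.mem_erase.mp hi).1]
    have hAF' : ∀ q, ∑ i ∈ Finset.univ.erase κ, (if σF i then (1 : ℝ) else -1) * w (k+1) q i = A q := by
      intro q
      rw [← hAF q]
      apply Finset.sum_congr rfl
      intro i hi
      rw [hwoff q i (Finset.mem_erase.mp hi).1]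
    have eqT : (fun q : ι => ∑ i, (if σT i then (1 : ℝ) else -1) * w k q i)
        = fun q => A q + u q κ := by
      funext q
      rw [← Finset.add_sum_erase Finset.univ (fun i => (if σT i then (1 : ℝ) else -1) * w k q i)
        (Finset.mem_univ κ), hσTκ, hwκk]
      simp only [if_true]
      ring
    have eqF : (fun q : ι => ∑ i, (if σF i then (1 : ℝ) else -1) * w k q i)
        = fun q => A q - u q κ := by
      funext q
      rw [← Finset.add_sum_erase Finset.univ (fun i => (if σF i then (1 : ℝ) else -1) * w k q i)
        (Finset.mem_univ κ), hσFκ, hwκk, hAF]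
      simp only [Bool.false_eq_true, if_false]
      ring
    have eqT' : (fun q : ι => ∑ i, (if σT i then (1 : ℝ) else -1) * w (k+1) q i)
        = fun q => A q + (L : ℝ) * v q κ := by
      funext q
      rw [← Finset.add_sum_erase Finset.univ (fun i => (if σT i then (1 : ℝ) else -1) * w (k+1) q i)
        (Finset.mem_univ κ), hσTκ, hwκk1, hAT']
      simp only [if_true]
      ring
    have eqF' : (fun q : ι => ∑ i, (if σF i then (1 : ℝ) else -1) * w (k+1) q i)
        = fun q => A q - (L : ℝ) * v q κ := by
      funext q
      rw [← Finset.add_sum_erase Finset.univ (fun i => (if σF i then (1 : ℝ) else -1) * w (k+1) q i)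
        (Finset.mem_univ κ), hσFκ, hwκk1, hAF']
      simp only [Bool.false_eq_true, if_false]
      ring
    have h1 : BddAbove (Set.range fun q : ι => A q + (L : ℝ) * v q κ) := by
      rw [← eqT']; exact hbdd (k+1) σT
    have h2 : BddAbove (Set.range fun q : ι => A q - (L : ℝ) * v q κ) := by
      rw [← eqF']; exact hbdd (k+1) σF
    have htwo := two_point A (fun q => u q κ) (fun q => v q κ) L (hc κ) h1 h2
    calc (⨆ q : ι, ∑ i, (if σT i then (1 : ℝ) else -1) * w k q i)
          + (⨆ q : ι, ∑ i, (if σF i then (1 : ℝ) else -1) * w k q i)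
        = (⨆ q : ι, A q + u q κ) + (⨆ q : ι, A q - u q κ) := by rw [eqT, eqF]
      _ ≤ (⨆ q : ι, A q + (L : ℝ) * v q κ) + (⨆ q : ι, A q - (L : ℝ) * v q κ) := htwo
      _ = (⨆ q : ι, ∑ i, (if σT i then (1 : ℝ) else -1) * w (k+1) q i)
          + (⨆ q : ι, ∑ i, (if σF i then (1 : ℝ) else -1) * w (k+1) q i) := by rw [eqT', eqF']
  have main : ∀ k, k ≤ m →
      (∑ σ : Fin m → Bool, ⨆ q : ι, ∑ i, (if σ i then (1 : ℝ) else -1) * w 0 q i)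
        ≤ ∑ σ : Fin m → Bool, ⨆ q : ι, ∑ i, (if σ i then (1 : ℝ) else -1) * w k q i := by
    intro k
    induction k with
    | zero => intro _; exact le_refl _
    | succ k ih =>
      intro hk
      exact (ih (Nat.le_of_succ_le hk)).trans (step k hk)
  have h0 : (fun σ : Fin m → Bool => ⨆ q : ι, ∑ i, (if σ i then (1 : ℝ) else -1) * u q i)
      = fun σ => ⨆ q : ι, ∑ i, (if σ i then (1 : ℝ) else -1) * w 0 q i := by
    funext σ
    refine iSup_congr fun q => Finset.sum_congr rfl fun i _ => ?_
    rw [hwdef]; unfold mixFn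
    rw [if_neg (Nat.not_lt_zero _)]
  have hmm : (fun σ : Fin m → Bool => ⨆ q : ι, ∑ i, (if σ i then (1 : ℝ) else -1) * ((L : ℝ) * v q i))
      = fun σ => ⨆ q : ι, ∑ i, (if σ i then (1 : ℝ) else -1) * w m q i := by
    funext σ
    refine iSup_congr fun q => Finset.sum_congr rfl fun i _ => ?_
    rw [hwdef]; unfold mixFn
    rw [if_pos i.isLt]
  calc ∑ σ : Fin m → Bool, (⨆ q : ι, ∑ i, (if σ i then (1 : ℝ) else -1) * u q i)
      = ∑ σ : Fin m → Bool, ⨆ q : ι, ∑ i, (if σ i then (1 : ℝ) else -1) * w 0 q i := by rw [h0]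
    _ ≤ ∑ σ : Fin m → Bool, ⨆ q : ι, ∑ i, (if σ i then (1 : ℝ) else -1) * w m q i :=
        main m (le_refl m)
    _ = ∑ σ : Fin m → Bool, ⨆ q : ι, ∑ i, (if σ i then (1 : ℝ) else -1) * ((L : ℝ) * v q i) := by
        rw [hmm]

private lemma logLoss_bound {τ p y : ℝ} (hτ : 0 < τ) (hτ' : τ < 1 / 2)
    (hp : p ∈ Set.Icc τ (1 - τ)) (hy : y ∈ Set.Icc (0 : ℝ) 1) :
    |logLoss p y| ≤ 2 * |Real.log τ| := by
  obtain ⟨hp1, hp2⟩ := hp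
  obtain ⟨hy1, hy2⟩ := hy
  have h0p : 0 < p := lt_of_lt_of_le hτ hp1
  have h0p' : 0 < 1 - p := by linarith
  have hlogτ : Real.log τ < 0 := Real.log_neg hτ (by linarith)
  have habsτ : |Real.log τ| = -Real.log τ := abs_of_neg hlogτ
  have lp1 : Real.log p ≤ 0 := Real.log_nonpos h0p.le (by linarith)
  have lp2 : Real.log τ ≤ Real.log p := Real.log_le_log hτ hp1
  have lq1 : Real.log (1 - p) ≤ 0 := Real.log_nonpos h0p'.le (by linarith)
  have lq2 : Real.log τ ≤ Real.log (1 - p) := Real.log_le_log hτ (by linarith)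
  rw [habsτ, abs_le]
  unfold logLoss
  constructor
  · nlinarith
  · nlinarith

/-- **Lipschitz contraction for Rademacher averages**: let `𝒬` be a countable
nonempty class of functions with values in `[τ, 1−τ]`, let `x_1,…,x_m` be fixed
points and `y_1,…,y_m ∈ [0,1]` fixed labels. If for each `i` the map
`p ↦ ℓ(p, y_i)` is `L`-Lipschitz on `[τ, 1−τ]`, then
`E_σ[ sup_{Q∈𝒬} (1/m) Σ_i σ_i ℓ(Q(x_i), y_i) ] ≤ L·E_σ[ sup_{Q∈𝒬} (1/m) Σ_i σ_i Q(x_i) ]`,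
where the `σ_i` are i.i.d. uniform signs and the expectation over `σ` is written as
the average over all sign patterns `σ ∈ {±1}^m`. -/
theorem rademacher_lipschitz_contraction
    {X : Type*} (τ : ℝ) (hτ : τ ∈ Set.Ioo (0 : ℝ) (1 / 2))
    (𝒬 : Set (X → ℝ)) (h𝒬 : 𝒬.Nonempty) (h𝒬c : 𝒬.Countable)
    (hrange : ∀ Q ∈ 𝒬, ∀ x, Q x ∈ Set.Icc τ (1 - τ))
    (m : ℕ) (hm : 0 < m)
    (x : Fin m → X) (y : Fin m → ℝ) (hy : ∀ i, y i ∈ Set.Icc (0 : ℝ) 1)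
    (L : NNReal)
    (hLip : ∀ i, LipschitzOnWith L (fun p => logLoss p (y i)) (Set.Icc τ (1 - τ))) :
    (∑ σ : Fin m → Bool, ⨆ Q : 𝒬, (1 / (m : ℝ)) *
        ∑ i, (if σ i then (1 : ℝ) else -1) * logLoss ((Q : X → ℝ) (x i)) (y i)) / 2 ^ m
      ≤ (L : ℝ) *
        ((∑ σ : Fin m → Bool, ⨆ Q : 𝒬, (1 / (m : ℝ)) *
          ∑ i, (if σ i then (1 : ℝ) else -1) * (Q : X → ℝ) (x i)) / 2 ^ m) := by
  obtain ⟨hτ0, hτ1⟩ := hτ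
  haveI : Nonempty ↥𝒬 := h𝒬.to_subtype
  set u : ↥𝒬 → Fin m → ℝ := fun Q i => logLoss ((Q : X → ℝ) (x i)) (y i) with hu
  set v : ↥𝒬 → Fin m → ℝ := fun Q i => (Q : X → ℝ) (x i) with hv
  have hmem : ∀ (Q : ↥𝒬) (i : Fin m), (Q : X → ℝ) (x i) ∈ Set.Icc τ (1 - τ) :=
    fun Q i => hrange Q.1 Q.2 (x i)
  set C : ℝ := 2 * |Real.log τ| + 1 with hC
  have hub : ∀ (Q : ↥𝒬) (i : Fin m), |u Q i| ≤ C := by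
    intro Q i
    have := logLoss_bound hτ0 hτ1 (hmem Q i) (hy i)
    rw [hC]; linarith
  have hvb : ∀ (Q : ↥𝒬) (i : Fin m), |v Q i| ≤ C := by
    intro Q i
    obtain ⟨h1, h2⟩ := hmem Q i
    have : |v Q i| ≤ 1 := abs_le.mpr ⟨by simp only [hv]; linarith, by simp only [hv]; linarith⟩
    have h3 : (0:ℝ) ≤ |Real.log τ| := abs_nonneg _
    rw [hC]; linarith
  have hcontr : ∀ (i : Fin m) (P Q : ↥𝒬), |u P i - u Q i| ≤ (L : ℝ) * |v P i - v Q i| := by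
    intro i P Q
    have := (hLip i).dist_le_mul _ (hmem P i) _ (hmem Q i)
    rwa [Real.dist_eq, Real.dist_eq] at this
  have key := contraction_aux L u v C hub hvb hcontr
  set S1 : ℝ := ∑ σ : Fin m → Bool, ⨆ Q : ↥𝒬, ∑ i, (if σ i then (1 : ℝ) else -1) * u Q i
    with hS1
  set S2 : ℝ := ∑ σ : Fin m → Bool, ⨆ Q : ↥𝒬, ∑ i, (if σ i then (1 : ℝ) else -1) * v Q i
    with hS2
  have hkey : S1 ≤ (L : ℝ) * S2 := by
    rw [hS1, hS2, Finset.mul_sum]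
    refine key.trans (le_of_eq (Finset.sum_congr rfl fun σ _ => ?_))
    rw [Real.mul_iSup_of_nonneg L.coe_nonneg]
    congr 1
    funext Q
    rw [Finset.mul_sum]
    apply Finset.sum_congr rfl
    intro i _
    ring
  have hL : (∑ σ : Fin m → Bool, ⨆ Q : ↥𝒬, (1 / (m : ℝ)) *
      ∑ i, (if σ i then (1 : ℝ) else -1) * u Q i) = (1 / (m : ℝ)) * S1 := by
    rw [hS1, Finset.mul_sum]
    apply Finset.sum_congr rfl
    intro σ _
    rw [Real.mul_iSup_of_nonneg (by positivity)]
  have hR : (∑ σ : Fin m → Bool, ⨆ Q : ↥𝒬, (1 / (m : ℝ)) *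
      ∑ i, (if σ i then (1 : ℝ) else -1) * v Q i) = (1 / (m : ℝ)) * S2 := by
    rw [hS2, Finset.mul_sum]
    apply Finset.sum_congr rfl
    intro σ _
    rw [Real.mul_iSup_of_nonneg (by positivity)]
  rw [hL, hR]
  have h1 : (1 / (m : ℝ)) * S1 ≤ (1 / (m : ℝ)) * ((L : ℝ) * S2) :=
    mul_le_mul_of_nonneg_left hkey (by positivity)
  calc (1 / (m : ℝ)) * S1 / 2 ^ m ≤ (1 / (m : ℝ)) * ((L : ℝ) * S2) / 2 ^ m := by
        gcongr
    _ = (L : ℝ) * ((1 / (m : ℝ)) * S2 / 2 ^ m) := by ring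
end

section
/- Bias consistency (deterministic form of Theorem 1): let (X,Y) ~ D with Y ∈ [0,1] and conditional mean Q†(x) = E[Y | X = x] taking values in (0,1) a.s. Suppose (i) sup_{Q ∈ 𝒬} |R(Q) − R̂_S(Q)| ≤ ε_gen, (ii) Q_θ ∈ 𝒬 satisfies R̂_S(Q_θ) ≤ inf_{Q ∈ 𝒬} R̂_S(Q) + ε_opt, and (iii) the in-class approximation error is ε_approx = inf_{Q ∈ 𝒬} R(Q) − R(Q†) ≥ 0, attained at some Q*_𝒬 ∈ 𝒬. Then E_X[ (Q_θ(X) − Q†(X))² ] ≤ (1/2) · ( ε_approx + 2 ε_gen + ε_opt ); equivalently, the L2(D)-distance between Q_θ and Q† is at most sqrt( (1/2)(ε_approx + 2 ε_gen + ε_opt) ). -/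
/-!
Conditionally on `X`, the log-loss is affine in `Y`, so by the tower property the excess risk
`R(Qθ) - R(Q†)` equals `E[KL(Q†(X) ‖ Qθ(X))]`, a mean of Bernoulli Kullback–Leibler divergences.
Pinsker's inequality `KL(p ‖ q) ≥ 2 (p - q)²` bounds it below by `2 E[(Qθ(X) - Q†(X))²]`, and
the chain `R(Qθ) ≤ R̂(Qθ) + ε_gen ≤ R̂(Q*) + ε_opt + ε_gen ≤ R(Q*) + ε_opt + 2 ε_gen` bounds it
above by `ε_approx + 2 ε_gen + ε_opt`.
-/

open MeasureTheory

open Real Set Filter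

theorem logLoss_eq_mul_add_mul (p y : ℝ) :
    logLoss p y = -log p * y + -log (1 - p) * (1 - y) := by
  unfold logLoss
  ring

theorem hasDerivAt_logLoss_left (y : ℝ) {s : ℝ} (hs : s ∈ Ioo (0 : ℝ) 1) :
    HasDerivAt (fun t => logLoss t y) ((s - y) / (s * (1 - s))) s := by
  have hs0 : s ≠ 0 := hs.1.ne'
  have hs1 : 1 - s ≠ 0 := sub_ne_zero.2 hs.2.ne'
  have hlog1 : HasDerivAt (fun t => log (1 - t)) ((1 - s)⁻¹ * (-1)) s :=
    (hasDerivAt_log hs1).comp s ((hasDerivAt_id s).const_sub 1)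
  refine (((hasDerivAt_log hs0).const_mul y).neg.sub (hlog1.const_mul (1 - y))).congr_deriv ?_
  field_simp
  ring

/-- Pinsker's inequality for Bernoulli distributions, with the Kullback–Leibler divergence
`KL(p ‖ q)` written as the excess log-loss `logLoss q p - logLoss p p`. -/
theorem two_mul_sq_sub_le_logLoss_sub_logLoss {p q : ℝ} (hp : p ∈ Ioo (0 : ℝ) 1)
    (hq : q ∈ Ioo (0 : ℝ) 1) : 2 * (q - p) ^ 2 ≤ logLoss q p - logLoss p p := by
  set F : ℝ → ℝ := fun s => logLoss s p - 2 * (s - p) ^ 2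
  have hF : ∀ s ∈ Ioo (0 : ℝ) 1,
      HasDerivAt F ((s - p) * ((s * (1 - s))⁻¹ - 4)) s := by
    intro s hs
    have hsq : HasDerivAt (fun t => 2 * (t - p) ^ 2) (2 * (2 * (s - p) ^ 1 * 1)) s :=
      (((hasDerivAt_id s).sub_const p).pow 2).const_mul 2
    refine ((hasDerivAt_logLoss_left p hs).sub hsq).congr_deriv ?_
    rw [div_eq_mul_inv]
    ring
  -- `s (1 - s) ≤ 1/4`, so the derivative of `F` has the sign of `s - p`
  have hfactor : ∀ s ∈ Ioo (0 : ℝ) 1, 0 ≤ (s * (1 - s))⁻¹ - 4 := by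
    intro s hs
    have hpos : 0 < s * (1 - s) := mul_pos hs.1 (sub_pos.2 hs.2)
    rw [sub_nonneg, le_inv_comm₀ (by norm_num) hpos]
    nlinarith [sq_nonneg (2 * s - 1)]
  have hdiff : DifferentiableOn ℝ F (Ioo 0 1) := fun s hs =>
    (hF s hs).differentiableAt.differentiableWithinAt
  have hmin : IsMinOn F (Ioo 0 1) p := by
    refine isMinOn_Ioo_of_deriv (hF p hp).continuousAt
      (hdiff.mono (Ioo_subset_Ioo_right hp.2.le)) (hdiff.mono (Ioo_subset_Ioo_left hp.1.le))
      (fun s hs => ?_) (fun s hs => ?_)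
    · have hs' : s ∈ Ioo (0 : ℝ) 1 := ⟨hs.1, hs.2.trans hp.2⟩
      rw [(hF s hs').deriv]
      exact mul_nonpos_of_nonpos_of_nonneg (sub_nonpos.2 hs.2.le) (hfactor s hs')
    · have hs' : s ∈ Ioo (0 : ℝ) 1 := ⟨hp.1.trans hs.1, hs.2⟩
      rw [(hF s hs').deriv]
      exact mul_nonneg (sub_nonneg.2 hs.1.le) (hfactor s hs')
  have := hmin hq
  simp only [mem_ofPred_eq, F, sub_self] at this
  linarith

section ConditionalMean

variable {Ω : Type*} {m m₀ : MeasurableSpace Ω} {μ : Measure Ω}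

theorem integrable_mul_and_integral_mul_eq_of_ae_eq_condExp (hm : m ≤ m₀)
    [SigmaFinite (μ.trim hm)] {f g c : Ω → ℝ} (hf : AEStronglyMeasurable[m] f μ)
    (hfg : Integrable (f * g) μ) (hg : Integrable g μ) (hc : c =ᵐ[μ] μ[g | m]) :
    Integrable (f * c) μ ∧ ∫ ω, (f * g) ω ∂μ = ∫ ω, (f * c) ω ∂μ := by
  have hpull : f * c =ᵐ[μ] μ[f * g | m] :=
    (EventuallyEq.rfl.mul hc).trans (condExp_mul_of_aestronglyMeasurable_left hf hfg hg).symm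
  exact ⟨integrable_condExp.congr hpull.symm,
    (integral_condExp hm).symm.trans (integral_congr_ae hpull.symm)⟩

theorem integrable_logLoss_and_integral_logLoss_eq_of_ae_eq_condExp [IsFiniteMeasure μ]
    (hm : m ≤ m₀) {P Y C : Ω → ℝ} (hP : Measurable[m] P) (hP01 : ∀ᵐ ω ∂μ, P ω ∈ Icc (0 : ℝ) 1)
    (hY : Measurable Y) (hY01 : ∀ᵐ ω ∂μ, Y ω ∈ Icc (0 : ℝ) 1) (hC : C =ᵐ[μ] μ[Y | m])
    (hint : Integrable (fun ω => logLoss (P ω) (Y ω)) μ) :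
    Integrable (fun ω => logLoss (P ω) (C ω)) μ ∧
      ∫ ω, logLoss (P ω) (Y ω) ∂μ = ∫ ω, logLoss (P ω) (C ω) ∂μ := by
  set A : Ω → ℝ := fun ω => -log (P ω)
  set B : Ω → ℝ := fun ω => -log (1 - P ω)
  have hA : Measurable[m] A := (measurable_log.comp hP).neg
  have hB : Measurable[m] B := (measurable_log.comp (measurable_const.sub hP)).neg
  -- both summands of the log-loss are nonnegative, so each is dominated by it
  have hAY : Integrable (A * Y) μ := by
    refine hint.mono' ((hA.mono hm le_rfl).mul hY).aestronglyMeasurable ?_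
    filter_upwards [hP01, hY01] with ω hp hy
    have hlogP : log (P ω) ≤ 0 := log_nonpos hp.1 hp.2
    have hlog1P : log (1 - P ω) ≤ 0 := log_nonpos (sub_nonneg.2 hp.2) (by linarith [hp.1])
    show ‖-log (P ω) * Y ω‖ ≤ _
    rw [norm_mul, norm_neg, norm_of_nonpos hlogP, norm_of_nonneg hy.1, logLoss]
    nlinarith [hy.2]
  have hBY : Integrable (B * fun ω => 1 - Y ω) μ := by
    refine (hint.sub hAY).congr (ae_of_all _ fun ω => ?_)
    simp only [Pi.sub_apply, Pi.mul_apply, logLoss_eq_mul_add_mul, A, B]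
    ring
  have hYint : Integrable Y μ := by
    refine .of_bound hY.aestronglyMeasurable 1 ?_
    filter_upwards [hY01] with ω hy
    rw [norm_of_nonneg hy.1]
    exact hy.2
  have hC' : (fun ω => 1 - C ω) =ᵐ[μ] μ[fun ω => 1 - Y ω | m] := by
    filter_upwards [hC, condExp_sub (integrable_const 1) hYint m] with ω hCω hsub
    change 1 - C ω = μ[(fun _ => (1 : ℝ)) - Y | m] ω
    rw [hsub, condExp_const hm, Pi.sub_apply, hCω]
  obtain ⟨hAC, hAY_eq⟩ := integrable_mul_and_integral_mul_eq_of_ae_eq_condExp hm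
    hA.aestronglyMeasurable hAY hYint hC
  obtain ⟨hBC, hBY_eq⟩ := integrable_mul_and_integral_mul_eq_of_ae_eq_condExp hm
    hB.aestronglyMeasurable hBY ((integrable_const 1).sub hYint) hC'
  simp only [logLoss_eq_mul_add_mul]
  change Integrable (A * C + B * fun ω => 1 - C ω) μ ∧
    ∫ ω, (A * Y) ω + (B * fun ω => 1 - Y ω) ω ∂μ = ∫ ω, (A * C) ω + (B * fun ω => 1 - C ω) ω ∂μ
  exact ⟨hAC.add hBC, by rw [integral_add hAY hBY, integral_add hAC hBC, hAY_eq, hBY_eq]⟩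

theorem two_mul_integral_sq_sub_le_integral_logLoss_sub [IsFiniteMeasure μ] (hm : m ≤ m₀)
    {P Y C : Ω → ℝ} (hP : Measurable[m] P) (hP01 : ∀ᵐ ω ∂μ, P ω ∈ Ioo (0 : ℝ) 1)
    (hC : Measurable[m] C) (hC01 : ∀ᵐ ω ∂μ, C ω ∈ Ioo (0 : ℝ) 1)
    (hY : Measurable Y) (hY01 : ∀ᵐ ω ∂μ, Y ω ∈ Icc (0 : ℝ) 1) (hCY : C =ᵐ[μ] μ[Y | m])
    (hintP : Integrable (fun ω => logLoss (P ω) (Y ω)) μ)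
    (hintC : Integrable (fun ω => logLoss (C ω) (Y ω)) μ) :
    2 * ∫ ω, (P ω - C ω) ^ 2 ∂μ
      ≤ (∫ ω, logLoss (P ω) (Y ω) ∂μ) - ∫ ω, logLoss (C ω) (Y ω) ∂μ := by
  obtain ⟨hPC, hP_eq⟩ := integrable_logLoss_and_integral_logLoss_eq_of_ae_eq_condExp hm hP
    (hP01.mono fun _ h => Ioo_subset_Icc_self h) hY hY01 hCY hintP
  obtain ⟨hCC, hC_eq⟩ := integrable_logLoss_and_integral_logLoss_eq_of_ae_eq_condExp hm hC
    (hC01.mono fun _ h => Ioo_subset_Icc_self h) hY hY01 hCY hintC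
  have hpinsker : ∀ᵐ ω ∂μ, 2 * (P ω - C ω) ^ 2 ≤ logLoss (P ω) (C ω) - logLoss (C ω) (C ω) := by
    filter_upwards [hP01, hC01] with ω hp hc
    exact two_mul_sq_sub_le_logLoss_sub_logLoss hc hp
  have hsq : Integrable (fun ω => 2 * (P ω - C ω) ^ 2) μ := by
    have hmeas : Measurable fun ω => 2 * (P ω - C ω) ^ 2 :=
      (((hP.mono hm le_rfl).sub (hC.mono hm le_rfl)).pow_const 2).const_mul 2
    refine (hPC.sub hCC).mono' hmeas.aestronglyMeasurable ?_
    filter_upwards [hpinsker] with ω h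
    rwa [norm_of_nonneg (by positivity)]
  rw [hP_eq, hC_eq, ← integral_sub hPC hCC, ← integral_const_mul]
  exact integral_mono_ae hsq (hPC.sub hCC) hpinsker

end ConditionalMean

theorem bias_consistency_general
    {𝒳 Ω : Type*} [MeasurableSpace 𝒳] [MeasurableSpace Ω]
    (μ : Measure Ω) [IsProbabilityMeasure μ]
    (X : Ω → 𝒳) (hX : Measurable X)
    (Y : Ω → ℝ) (hYmeas : Measurable Y) (hY01 : ∀ᵐ ω ∂μ, Y ω ∈ Set.Icc (0 : ℝ) 1)
    (Qdag : 𝒳 → ℝ) (hQdagMeas : Measurable Qdag)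
    (hQdagCond : (fun ω => Qdag (X ω)) =ᵐ[μ] μ[Y | MeasurableSpace.comap X inferInstance])
    (hQdag01 : ∀ᵐ ω ∂μ, Qdag (X ω) ∈ Set.Ioo (0 : ℝ) 1)
    (τ : ℝ) (hτ : τ ∈ Set.Ioo (0 : ℝ) (1 / 2))
    (𝒬 : Set (𝒳 → ℝ))
    (hmeas : ∀ Q ∈ 𝒬, Measurable Q)
    (hrange : ∀ Q ∈ 𝒬, ∀ x, Q x ∈ Set.Icc τ (1 - τ))
    (hint : ∀ Q ∈ 𝒬, Integrable (fun ω => logLoss (Q (X ω)) (Y ω)) μ)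
    (hintQdag : Integrable (fun ω => logLoss (Qdag (X ω)) (Y ω)) μ)
    (m : ℕ) (S : Fin m → 𝒳 × ℝ)
    (εgen εopt εapprox : ℝ)
    -- (i) uniform deviation bound
    (hgen : ∀ Q ∈ 𝒬,
      |(∫ ω, logLoss (Q (X ω)) (Y ω) ∂μ)
          - (1 / (m : ℝ)) * ∑ i, logLoss (Q (S i).1) (S i).2| ≤ εgen)
    -- (ii) approximate empirical risk minimization
    (Qθ : 𝒳 → ℝ) (hQθ : Qθ ∈ 𝒬)
    (hopt : ∀ Q ∈ 𝒬,
      (1 / (m : ℝ)) * ∑ i, logLoss (Qθ (S i).1) (S i).2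
        ≤ (1 / (m : ℝ)) * ∑ i, logLoss (Q (S i).1) (S i).2 + εopt)
    -- (iii) in-class approximation error, attained at Qstar
    (Qstar : 𝒳 → ℝ) (hQstar : Qstar ∈ 𝒬)
    (happrox : εapprox = (∫ ω, logLoss (Qstar (X ω)) (Y ω) ∂μ)
        - ∫ ω, logLoss (Qdag (X ω)) (Y ω) ∂μ) :
    (∫ ω, (Qθ (X ω) - Qdag (X ω)) ^ 2 ∂μ)
        ≤ (1 / 2) * (εapprox + 2 * εgen + εopt)
    ∧ Real.sqrt (∫ ω, (Qθ (X ω) - Qdag (X ω)) ^ 2 ∂μ)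
        ≤ Real.sqrt ((1 / 2) * (εapprox + 2 * εgen + εopt)) := by
  have hXm : Measurable[MeasurableSpace.comap X inferInstance] X := comap_measurable X
  have hQθ01 : ∀ᵐ ω ∂μ, Qθ (X ω) ∈ Ioo (0 : ℝ) 1 := ae_of_all _ fun ω =>
    ⟨hτ.1.trans_le (hrange Qθ hQθ (X ω)).1, (hrange Qθ hQθ (X ω)).2.trans_lt (by linarith [hτ.1])⟩
  have hexcess := two_mul_integral_sq_sub_le_integral_logLoss_sub hX.comap_le
    (P := fun ω => Qθ (X ω)) (C := fun ω => Qdag (X ω)) ((hmeas Qθ hQθ).comp hXm) hQθ01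
    (hQdagMeas.comp hXm) hQdag01 hYmeas hY01 hQdagCond (hint Qθ hQθ) hintQdag
  have hgenθ := abs_le.1 (hgen Qθ hQθ)
  have hgenstar := abs_le.1 (hgen Qstar hQstar)
  have hoptstar := hopt Qstar hQstar
  have hbound : (∫ ω, (Qθ (X ω) - Qdag (X ω)) ^ 2 ∂μ)
      ≤ (1 / 2) * (εapprox + 2 * εgen + εopt) := by
    linarith [hgenθ.1, hgenθ.2, hgenstar.1, hgenstar.2]
  exact ⟨hbound, Real.sqrt_le_sqrt hbound⟩

/-- **Bias consistency (deterministic form of Theorem 1)**: let `(X,Y) ~ D` with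
`Y ∈ [0,1]` a.s. and conditional mean `Q†(x) = E[Y | X = x]` taking values in
`(0,1)` a.s. Let `𝒬` be a class of measurable predictors with values in
`[τ, 1−τ]`, with population risk `R(Q) = E[ℓ(Q(X),Y)]` and empirical risk
`R̂_S(Q) = (1/m) Σ_i ℓ(Q(x_i),y_i)` on a fixed sample `S`. Suppose
(i) `sup_{Q∈𝒬} |R(Q) − R̂_S(Q)| ≤ ε_gen`;
(ii) `Q_θ ∈ 𝒬` satisfies `R̂_S(Q_θ) ≤ inf_{Q∈𝒬} R̂_S(Q) + ε_opt`;
(iii) the in-class approximation error `ε_approx = inf_{Q∈𝒬} R(Q) − R(Q†) ≥ 0`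
is attained at some `Q*_𝒬 ∈ 𝒬`.
Then `E_X[(Q_θ(X) − Q†(X))²] ≤ (1/2)(ε_approx + 2 ε_gen + ε_opt)`; equivalently,
the `L²(D)`-distance between `Q_θ` and `Q†` is at most
`sqrt((1/2)(ε_approx + 2 ε_gen + ε_opt))`. -/
theorem bias_consistency
    {𝒳 Ω : Type*} [MeasurableSpace 𝒳] [MeasurableSpace Ω]
    (μ : Measure Ω) [IsProbabilityMeasure μ]
    (X : Ω → 𝒳) (hX : Measurable X)
    (Y : Ω → ℝ) (hYmeas : Measurable Y) (hY01 : ∀ᵐ ω ∂μ, Y ω ∈ Set.Icc (0 : ℝ) 1)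
    (Qdag : 𝒳 → ℝ) (hQdagMeas : Measurable Qdag)
    (hQdagCond : (fun ω => Qdag (X ω)) =ᵐ[μ] μ[Y | MeasurableSpace.comap X inferInstance])
    (hQdag01 : ∀ᵐ ω ∂μ, Qdag (X ω) ∈ Set.Ioo (0 : ℝ) 1)
    (τ : ℝ) (hτ : τ ∈ Set.Ioo (0 : ℝ) (1 / 2))
    (𝒬 : Set (𝒳 → ℝ))
    (hmeas : ∀ Q ∈ 𝒬, Measurable Q)
    (hrange : ∀ Q ∈ 𝒬, ∀ x, Q x ∈ Set.Icc τ (1 - τ))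
    (hint : ∀ Q ∈ 𝒬, Integrable (fun ω => logLoss (Q (X ω)) (Y ω)) μ)
    (hintQdag : Integrable (fun ω => logLoss (Qdag (X ω)) (Y ω)) μ)
    (m : ℕ) (hm : 0 < m) (S : Fin m → 𝒳 × ℝ)
    (εgen εopt εapprox : ℝ) (hεgen : 0 ≤ εgen) (hεopt : 0 ≤ εopt)
    -- (i) uniform deviation bound
    (hgen : ∀ Q ∈ 𝒬,
      |(∫ ω, logLoss (Q (X ω)) (Y ω) ∂μ)
          - (1 / (m : ℝ)) * ∑ i, logLoss (Q (S i).1) (S i).2| ≤ εgen)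
    -- (ii) approximate empirical risk minimization
    (Qθ : 𝒳 → ℝ) (hQθ : Qθ ∈ 𝒬)
    (hopt : ∀ Q ∈ 𝒬,
      (1 / (m : ℝ)) * ∑ i, logLoss (Qθ (S i).1) (S i).2
        ≤ (1 / (m : ℝ)) * ∑ i, logLoss (Q (S i).1) (S i).2 + εopt)
    -- (iii) in-class approximation error, attained at Qstar
    (Qstar : 𝒳 → ℝ) (hQstar : Qstar ∈ 𝒬)
    (hstar : ∀ Q ∈ 𝒬,
      (∫ ω, logLoss (Qstar (X ω)) (Y ω) ∂μ) ≤ ∫ ω, logLoss (Q (X ω)) (Y ω) ∂μ)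
    (happrox : εapprox = (∫ ω, logLoss (Qstar (X ω)) (Y ω) ∂μ)
        - ∫ ω, logLoss (Qdag (X ω)) (Y ω) ∂μ)
    (hεapprox : 0 ≤ εapprox) :
    (∫ ω, (Qθ (X ω) - Qdag (X ω)) ^ 2 ∂μ)
        ≤ (1 / 2) * (εapprox + 2 * εgen + εopt)
    ∧ Real.sqrt (∫ ω, (Qθ (X ω) - Qdag (X ω)) ^ 2 ∂μ)
        ≤ Real.sqrt ((1 / 2) * (εapprox + 2 * εgen + εopt)) :=
  bias_consistency_general μ X hX Y hYmeas hY01 Qdag hQdagMeas hQdagCond hQdag01 τ hτ 𝒬 hmeas hrange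
    hint hintQdag m S εgen εopt εapprox hgen Qθ hQθ hopt Qstar hQstar happrox
end
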